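/- arXiv:1811.10174 — 3 statements merged into one kernel-verified Lean document; each statement's English description precedes it below -/
import Mathlib

section
/- Let H: ℝ^n → (−∞, ∞) be continuous with min H = 0, and suppose there exist R > 0 and C > 0 with min_{|z|=R} H(z) > δ and H(x) ≥ min_{|z|=R} H(z) + C(|x| − R) for all |x| > R, and suppose there exist r > 0 and 0 < ε < δ with H(x) < ε for |x| < r. Then for all sufficiently small τ > 0, (∫_{H(x)>δ} e^{−H(x)/τ} dx) / (∫_{ℝ^n} e^{−H(x)/τ} dx) ≤ C' e^{−(δ−ε)/τ} for a constant C' depending on R, r, C, n but not on τ. -/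
/-!
For `τ ≤ 1` and `H x > δ` we have `e^{-H x/τ} ≤ e^{-δ/τ} e^{δ - H x}`, and the linear growth of `H`
makes `e^{-H}` integrable, so the mass of `{H > δ}` is `O(e^{-δ/τ})`. On the ball `‖x‖ < r` the
integrand is at least `e^{-ε/τ}`, so the total mass is at least `vol(B_r) e^{-ε/τ}`.
-/

open MeasureTheory Real

theorem Real.exp_neg_mul_le_mul_inv_one_add_pow {c t : ℝ} (hc : 0 < c) (ht : 0 ≤ t) (k : ℕ) :
    exp (-c * t) ≤ k.factorial * exp c / c ^ k * ((1 + t) ^ k)⁻¹ := by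
  have h := pow_div_factorial_le_exp (x := c * (1 + t)) (by positivity) k
  rw [mul_pow, div_le_iff₀ (by positivity), mul_add, mul_one, exp_add] at h
  rw [← div_eq_mul_inv, div_div, le_div_iff₀ (by positivity), neg_mul, exp_neg,
    inv_mul_le_iff₀ (exp_pos _)]
  linarith

theorem Real.exp_neg_div_le_exp_sub_mul {a δ τ : ℝ} (hτ : 0 < τ) (hτ1 : τ ≤ 1) (h : δ ≤ a) :
    exp (-a / τ) ≤ exp (δ - a) * exp (-δ / τ) := by
  rw [← exp_add, exp_le_exp]
  have hgap := le_div_self (sub_nonneg.2 h) hτ hτ1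
  have hsplit : -a / τ = -δ / τ - (a - δ) / τ := by ring
  linarith

section LinearGrowth

variable {E : Type*} [NormedAddCommGroup E] [NormedSpace ℝ E] [FiniteDimensional ℝ E]
  [MeasurableSpace E] [BorelSpace E] (μ : Measure E) [μ.IsAddHaarMeasure]

theorem integrable_exp_neg_mul_norm {c : ℝ} (hc : 0 < c) :
    Integrable (fun x : E ↦ exp (-c * ‖x‖)) μ := by
  set k := Module.finrank ℝ E + 1
  have hk : (Module.finrank ℝ E : ℝ) < (k : ℕ) := by simp [k]
  refine ((integrable_one_add_norm hk).const_mul (k.factorial * exp c / c ^ k)).mono'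
    (by fun_prop) (ae_of_all _ fun x ↦ ?_)
  rw [norm_of_nonneg (exp_pos _).le, rpow_neg (by positivity), rpow_natCast]
  exact exp_neg_mul_le_mul_inv_one_add_pow hc (norm_nonneg x) k

theorem integrable_exp_neg_of_mul_norm_sub_le {f : E → ℝ} (hf : Measurable f) {b c : ℝ}
    (hc : 0 < c) (hbound : ∀ x, c * ‖x‖ - b ≤ f x) :
    Integrable (fun x ↦ exp (-f x)) μ := by
  refine ((integrable_exp_neg_mul_norm μ hc).const_mul (exp b)).mono'
    (by fun_prop) (ae_of_all _ fun x ↦ ?_)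
  rw [norm_of_nonneg (exp_pos _).le, ← exp_add, exp_le_exp]
  linarith [hbound x]

end LinearGrowth

section Gibbs

variable {α : Type*} [MeasurableSpace α] {μ : Measure α} {f : α → ℝ} {τ : ℝ}

theorem integrable_exp_neg_div (hf0 : ∀ x, 0 ≤ f x) (hint : Integrable (fun x ↦ exp (-f x)) μ)
    (hf : Measurable f) (hτ : 0 < τ) (hτ1 : τ ≤ 1) :
    Integrable (fun x ↦ exp (-f x / τ)) μ := by
  refine hint.mono' (by fun_prop) (ae_of_all _ fun x ↦ ?_)
  rw [norm_of_nonneg (exp_pos _).le, exp_le_exp, neg_div, neg_le_neg_iff]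
  exact le_div_self (hf0 x) hτ hτ1

theorem setIntegral_exp_neg_div_le (hint : Integrable (fun x ↦ exp (-f x)) μ)
    (hf : Measurable f) (hτ : 0 < τ) (hτ1 : τ ≤ 1) (δ : ℝ) :
    ∫ x in {x | δ < f x}, exp (-f x / τ) ∂μ ≤ exp δ * (∫ x, exp (-f x) ∂μ) * exp (-δ / τ) := by
  have hmaj : Integrable (fun x ↦ exp (δ - f x) * exp (-δ / τ)) μ := by
    simp_rw [sub_eq_add_neg, exp_add, mul_assoc]
    exact (hint.mul_const _).const_mul _
  calc ∫ x in {x | δ < f x}, exp (-f x / τ) ∂μ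
      ≤ ∫ x in {x | δ < f x}, exp (δ - f x) * exp (-δ / τ) ∂μ :=
        integral_mono_of_nonneg (ae_of_all _ fun _ ↦ (exp_pos _).le) hmaj.integrableOn
          (ae_restrict_of_forall_mem (measurableSet_lt measurable_const hf)
            fun x hx ↦ exp_neg_div_le_exp_sub_mul hτ hτ1 hx.le)
    _ ≤ ∫ x, exp (δ - f x) * exp (-δ / τ) ∂μ :=
        setIntegral_le_integral hmaj (ae_of_all _ fun _ ↦ by positivity)
    _ = exp δ * (∫ x, exp (-f x) ∂μ) * exp (-δ / τ) := by
        simp_rw [sub_eq_add_neg, exp_add, integral_mul_const, integral_const_mul]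

theorem exp_neg_div_mul_measureReal_le_integral {s : Set α} (hs : MeasurableSet s)
    (hμs : μ s ≠ ⊤) {ε : ℝ} (hfs : ∀ x ∈ s, f x ≤ ε) (hτ : 0 < τ)
    (hint : Integrable (fun x ↦ exp (-f x / τ)) μ) :
    exp (-ε / τ) * μ.real s ≤ ∫ x, exp (-f x / τ) ∂μ :=
  (setIntegral_ge_of_const_le_real hs hμs
      (fun x hx ↦ exp_le_exp.2 (div_le_div_of_nonneg_right (by linarith [hfs x hx]) hτ.le))
      hint.integrableOn).trans
    (setIntegral_le_integral hint (ae_of_all _ fun _ ↦ (exp_pos _).le))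

theorem gibbs_mass_ratio_le (hf0 : ∀ x, 0 ≤ f x) (hint : Integrable (fun x ↦ exp (-f x)) μ)
    (hf : Measurable f) {s : Set α} (hs : MeasurableSet s) (hμs : μ s ≠ ⊤) (hμs0 : 0 < μ.real s)
    {δ ε : ℝ} (hfs : ∀ x ∈ s, f x ≤ ε) (hτ : 0 < τ) (hτ1 : τ ≤ 1) :
    (∫ x in {x | δ < f x}, exp (-f x / τ) ∂μ) / (∫ x, exp (-f x / τ) ∂μ)
      ≤ exp δ * (∫ x, exp (-f x) ∂μ) / μ.real s * exp (-(δ - ε) / τ) := by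
  have hden := exp_neg_div_mul_measureReal_le_integral hs hμs hfs hτ
    (integrable_exp_neg_div hf0 hint hf hτ hτ1)
  have hsplit : exp (-δ / τ) = exp (-ε / τ) * exp (-(δ - ε) / τ) := by
    rw [← exp_add]; ring_nf
  have hZ : 0 ≤ ∫ x, exp (-f x) ∂μ := integral_nonneg fun _ ↦ (exp_pos _).le
  calc _ ≤ exp δ * (∫ x, exp (-f x) ∂μ) * exp (-δ / τ) / (exp (-ε / τ) * μ.real s) :=
        div_le_div₀ (by positivity)
          (setIntegral_exp_neg_div_le hint hf hτ hτ1 δ) (by positivity) hden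
    _ = _ := by rw [hsplit]; field_simp

end Gibbs

theorem gibbs_concentration_general
    {n : ℕ} (H : EuclideanSpace ℝ (Fin n) → ℝ) (hcont : Continuous H)
    (hH0 : ∀ x, 0 ≤ H x)
    (δ ε M R r C : ℝ)
    (hε : 0 < ε) (hεδ : ε < δ) (hr : 0 < r) (hC : 0 < C)
    (hM : δ < M)
    (hgrowth : ∀ x, R < ‖x‖ → M + C * (‖x‖ - R) ≤ H x)
    (hsmall : ∀ x, ‖x‖ < r → H x < ε) :
    ∃ C' : ℝ, 0 < C' ∧ ∃ τ₀ : ℝ, 0 < τ₀ ∧ ∀ τ : ℝ, 0 < τ → τ < τ₀ →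
      (∫ x in {x | δ < H x}, Real.exp (-H x / τ)) / (∫ x, Real.exp (-H x / τ))
        ≤ C' * Real.exp (-(δ - ε) / τ) := by
  have hM0 : 0 < M := by linarith
  have hlinear : ∀ x, C * ‖x‖ - C * R ≤ H x := fun x ↦ by
    rcases le_or_gt ‖x‖ R with hx | hx
    · nlinarith [hH0 x]
    · linarith [hgrowth x hx]
  have hint := integrable_exp_neg_of_mul_norm_sub_le volume hcont.measurable hC hlinear
  set B := Metric.ball (0 : EuclideanSpace ℝ (Fin n)) r
  have hB : 0 < volume.real B :=
    ENNReal.toReal_pos (Metric.measure_ball_pos _ _ hr).ne' measure_ball_lt_top.ne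
  refine ⟨exp δ * (∫ x, exp (-H x)) / volume.real B,
    by positivity [integral_exp_pos hint], 1, one_pos, fun τ hτ hτ1 ↦ ?_⟩
  exact gibbs_mass_ratio_le hH0 hint hcont.measurable measurableSet_ball measure_ball_lt_top.ne
    hB (fun x hx ↦ (hsmall x (mem_ball_zero_iff.1 hx)).le) hτ hτ1.le

theorem gibbs_concentration
    {n : ℕ} (H : EuclideanSpace ℝ (Fin n) → ℝ) (hcont : Continuous H)
    (hH0 : ∀ x, 0 ≤ H x) (hmin : ∃ x, H x = 0)
    (δ ε M R r C : ℝ)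
    (hε : 0 < ε) (hεδ : ε < δ) (hR : 0 < R) (hr : 0 < r) (hC : 0 < C)
    (hM : δ < M) (hMle : ∀ z, ‖z‖ = R → M ≤ H z)
    (hgrowth : ∀ x, R < ‖x‖ → M + C * (‖x‖ - R) ≤ H x)
    (hsmall : ∀ x, ‖x‖ < r → H x < ε) :
    ∃ C' : ℝ, 0 < C' ∧ ∃ τ₀ : ℝ, 0 < τ₀ ∧ ∀ τ : ℝ, 0 < τ → τ < τ₀ →
      (∫ x in {x | δ < H x}, Real.exp (-H x / τ)) / (∫ x, Real.exp (-H x / τ))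
        ≤ C' * Real.exp (-(δ - ε) / τ) :=
  gibbs_concentration_general H hcont hH0 δ ε M R r C hε hεδ hr hC hM hgrowth hsmall
end

section
/- Suppose a nonnegative differentiable function I: [t₀, ∞) → [0, ∞) satisfies I'(t) ≤ −C₁(1+t)^{−β} I(t) + C₂(1+t)^{−1+ε} for all t ≥ t₀, where 0 < β < 1, ε > 0 with β + 2ε < 1, and C₁, C₂ > 0. Then there exists a constant C such that I(t) ≤ (2C₂/C₁)(1+t)^{−1+β+2ε} + I(t₀) exp(−(C₁/ν)((1+t)^ν − (1+t₀)^ν)) for all t ≥ t₀ (for t₀ large enough), where ν = 1 − β − ε > 0; in particular I(t) = O((1+t)^{−1+β+2ε}). -/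
/-!
With `ν = 1 - β - ε` let `A(t) = (2C₂/C₁)(1+t)^(-1+β+2ε)` and `φ(t) = (C₁/ν)(1+t)^ν`, so `φ'(t) = C₁(1+t)^(-β-ε)`.
Since `I ≥ 0` and `(1+t)^(-β-ε) ≤ (1+t)^(-β)`, the hypothesis gives `I' ≤ -φ' I + C₂(1+t)^(-1+ε)`.
The term `-φ' A` equals twice the forcing `C₂(1+t)^(-1+ε)`, and `-A'` is at most the forcing as soon as
`(1+t)^ν ≥ 2/C₁`; from then on `Q = I - A` satisfies `Q' ≤ -φ' Q`, so `Q e^φ` is nonincreasing.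
This gives the explicit bound, and `e^(-φ)` decays faster than any power of `1+t`.
-/

open Asymptotics Filter

open Real in
theorem le_mul_exp_sub_of_hasDerivAt_le {f f' φ φ' : ℝ → ℝ} {a t : ℝ}
    (hf : ∀ s, a ≤ s → HasDerivAt f (f' s) s) (hφ : ∀ s, a ≤ s → HasDerivAt φ (φ' s) s)
    (hle : ∀ s, a ≤ s → f' s ≤ -φ' s * f s) (ht : a ≤ t) :
    f t ≤ f a * exp (φ a - φ t) := by
  have hG : ∀ s, a ≤ s → HasDerivAt (fun s => f s * exp (φ s))
      ((f' s + φ' s * f s) * exp (φ s)) s := fun s hs =>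
    ((hf s hs).mul (hφ s hs).exp).congr_deriv (by ring)
  have hanti : AntitoneOn (fun s => f s * exp (φ s)) (Set.Ici a) := by
    refine antitoneOn_of_hasDerivWithinAt_nonpos (convex_Ici a)
      (fun s hs => (hG s hs).continuousAt.continuousWithinAt)
      (fun s hs => (hG s (interior_subset hs)).hasDerivWithinAt) fun s hs => ?_
    exact mul_nonpos_of_nonpos_of_nonneg
      (by linarith [hle s (interior_subset hs)]) (exp_pos _).le
  rw [exp_sub, mul_div_assoc', le_div_iff₀ (exp_pos _)]
  exact hanti Set.self_mem_Ici ht ht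

theorem hasDerivAt_mul_one_add_rpow (c p : ℝ) {t : ℝ} (ht : 0 < 1 + t) :
    HasDerivAt (fun t => c * (1 + t) ^ p) (c * p * (1 + t) ^ (p - 1)) t :=
  ((((hasDerivAt_id t).const_add 1).rpow_const (Or.inl ht.ne')).const_mul c).congr_deriv
    (by simp [mul_assoc])

theorem hasDerivAt_div_mul_one_add_rpow (c : ℝ) {p t : ℝ} (hp : p ≠ 0) (ht : 0 < 1 + t) :
    HasDerivAt (fun t => c / p * (1 + t) ^ p) (c * (1 + t) ^ (p - 1)) t :=
  (hasDerivAt_mul_one_add_rpow (c / p) p ht).congr_deriv (by field_simp)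

theorem isLittleO_exp_neg_mul_one_add_rpow_sub {c ν : ℝ} (hc : 0 < c) (hν : 0 < ν) (s α : ℝ) :
    (fun t : ℝ => Real.exp (-c * ((1 + t) ^ ν - s))) =o[atTop] fun t => (1 + t) ^ α := by
  have hlim : Tendsto (fun t : ℝ => (1 + t) ^ ν) atTop atTop :=
    (tendsto_rpow_atTop hν).comp (tendsto_atTop_add_const_left atTop 1 tendsto_id)
  have hpow : (fun t : ℝ => ((1 + t) ^ ν) ^ (α / ν)) =ᶠ[atTop] fun t => (1 + t) ^ α := by
    filter_upwards [eventually_ge_atTop 0] with t ht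
    rw [← Real.rpow_mul (by linarith), mul_div_cancel₀ _ hν.ne']
  have := (((isLittleO_exp_neg_mul_rpow_atTop hc (α / ν)).comp_tendsto hlim).congr' .rfl
    hpow).const_mul_left (Real.exp (c * s))
  refine this.congr_left fun t => ?_
  simp only [Function.comp_apply, ← Real.exp_add]
  ring_nf

open Real in
theorem deriv_sub_profile_le {x β ε C₁ C₂ i d : ℝ} (hx : 1 ≤ x) (hε : 0 ≤ ε)
    (hβε : 0 ≤ β + 2 * ε) (hC₁ : 0 < C₁) (hC₂ : 0 ≤ C₂) (hi : 0 ≤ i)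
    (hxν : 2 / C₁ ≤ x ^ (1 - β - ε))
    (hd : d ≤ -C₁ * x ^ (-β) * i + C₂ * x ^ (-1 + ε)) :
    d - 2 * C₂ / C₁ * (-1 + β + 2 * ε) * x ^ (-1 + β + 2 * ε - 1)
      ≤ -(C₁ * x ^ (1 - β - ε - 1)) * (i - 2 * C₂ / C₁ * x ^ (-1 + β + 2 * ε)) := by
  have hx0 : 0 < x := by linarith
  have hdecay : x ^ (1 - β - ε - 1) ≤ x ^ (-β) := rpow_le_rpow_of_exponent_le hx (by linarith)
  have hprofile : C₁ * x ^ (1 - β - ε - 1) * (2 * C₂ / C₁ * x ^ (-1 + β + 2 * ε))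
      = 2 * C₂ * x ^ (-1 + ε) := by
    have : x ^ (1 - β - ε - 1) * x ^ (-1 + β + 2 * ε) = x ^ (-1 + ε) := by
      rw [← rpow_add hx0]; ring_nf
    rw [← this]
    field_simp
  have hprofile_deriv : 2 * C₂ / C₁ * x ^ (-1 + β + 2 * ε - 1) ≤ C₂ * x ^ (-1 + ε) := by
    have : x ^ (-1 + ε) = x ^ (1 - β - ε) * x ^ (-1 + β + 2 * ε - 1) := by
      rw [← rpow_add hx0]; ring_nf
    calc 2 * C₂ / C₁ * x ^ (-1 + β + 2 * ε - 1)
        = C₂ * (2 / C₁) * x ^ (-1 + β + 2 * ε - 1) := by ring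
      _ ≤ C₂ * x ^ (1 - β - ε) * x ^ (-1 + β + 2 * ε - 1) := by gcongr
      _ = C₂ * x ^ (-1 + ε) := by rw [this, mul_assoc]
  have hpos : 0 ≤ 2 * C₂ / C₁ * x ^ (-1 + β + 2 * ε - 1) := by positivity
  nlinarith [mul_le_mul_of_nonneg_left hdecay (mul_nonneg hC₁.le hi)]

theorem le_profile_add_mul_exp_of_deriv_le {I : ℝ → ℝ} {t₁ β ε C₁ C₂ : ℝ} (hε : 0 ≤ ε)
    (hβε : 0 ≤ β + 2 * ε) (hν : 0 < 1 - β - ε) (hC₁ : 0 < C₁) (hC₂ : 0 ≤ C₂) (ht₁ : 0 ≤ t₁)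
    (hlarge : 2 / C₁ ≤ (1 + t₁) ^ (1 - β - ε))
    (hI0 : ∀ t, t₁ ≤ t → 0 ≤ I t)
    (hIdiff : ∀ t, t₁ ≤ t → DifferentiableAt ℝ I t)
    (hI' : ∀ t, t₁ ≤ t →
      deriv I t ≤ -C₁ * (1 + t) ^ (-β) * I t + C₂ * (1 + t) ^ (-1 + ε))
    {t : ℝ} (ht : t₁ ≤ t) :
    I t ≤ (2 * C₂ / C₁) * (1 + t) ^ (-1 + β + 2 * ε)
      + I t₁ * Real.exp (-(C₁ / (1 - β - ε))
          * ((1 + t) ^ (1 - β - ε) - (1 + t₁) ^ (1 - β - ε))) := by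
  have hcomparison := le_mul_exp_sub_of_hasDerivAt_le
    (f := fun t => I t - 2 * C₂ / C₁ * (1 + t) ^ (-1 + β + 2 * ε))
    (φ := fun t => C₁ / (1 - β - ε) * (1 + t) ^ (1 - β - ε))
    (fun s hs => (hIdiff s hs).hasDerivAt.sub (hasDerivAt_mul_one_add_rpow _ _ (by linarith)))
    (fun s hs => hasDerivAt_div_mul_one_add_rpow C₁ hν.ne' (by linarith))
    (fun s hs => deriv_sub_profile_le (by linarith) hε hβε hC₁ hC₂ (hI0 s hs)
      (hlarge.trans (Real.rpow_le_rpow (by linarith) (by linarith) hν.le)) (hI' s hs)) ht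
  have hprofile : 0 ≤ 2 * C₂ / C₁ * (1 + t₁) ^ (-1 + β + 2 * ε) := by positivity
  have hexp : Real.exp (C₁ / (1 - β - ε) * (1 + t₁) ^ (1 - β - ε)
      - C₁ / (1 - β - ε) * (1 + t) ^ (1 - β - ε)) = Real.exp (-(C₁ / (1 - β - ε))
          * ((1 + t) ^ (1 - β - ε) - (1 + t₁) ^ (1 - β - ε))) := by ring_nf
  have := hcomparison.trans
    (mul_le_mul_of_nonneg_right (sub_le_self _ hprofile) (Real.exp_pos _).le)
  rw [hexp] at this
  linarith

theorem gronwall_annealing_general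
    (I : ℝ → ℝ) (t₀ β ε C₁ C₂ : ℝ)
    (hβ : 0 < β) (hε : 0 < ε) (hβε : β + 2 * ε < 1)
    (hC₁ : 0 < C₁) (hC₂ : 0 < C₂)
    (hI0 : ∀ t, t₀ ≤ t → 0 ≤ I t)
    (hIdiff : ∀ t, t₀ ≤ t → DifferentiableAt ℝ I t)
    (hI' : ∀ t, t₀ ≤ t →
      deriv I t ≤ -C₁ * (1 + t) ^ (-β) * I t + C₂ * (1 + t) ^ (-1 + ε)) :
    ∃ t₁ : ℝ, t₀ ≤ t₁ ∧
      (∀ t, t₁ ≤ t →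
        I t ≤ (2 * C₂ / C₁) * (1 + t) ^ (-1 + β + 2 * ε)
          + I t₁ * Real.exp (-(C₁ / (1 - β - ε))
              * ((1 + t) ^ (1 - β - ε) - (1 + t₁) ^ (1 - β - ε)))) ∧
      (fun t => I t) =O[atTop] fun t => (1 + t) ^ (-1 + β + 2 * ε) := by
  have hν : 0 < 1 - β - ε := by linarith
  obtain ⟨t₁, ht₁t₀, ht₁, hlarge⟩ : ∃ t₁, t₀ ≤ t₁ ∧ 0 ≤ t₁ ∧ 2 / C₁ ≤ (1 + t₁) ^ (1 - β - ε) :=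
    ((eventually_ge_atTop t₀).and <| (eventually_ge_atTop 0).and <|
      ((tendsto_rpow_atTop hν).comp
        (tendsto_atTop_add_const_left atTop 1 tendsto_id)).eventually_ge_atTop _).exists
  have hbound := fun t (ht : t₁ ≤ t) =>
    le_profile_add_mul_exp_of_deriv_le hε.le (by linarith) hν hC₁ hC₂.le ht₁ hlarge
      (fun s hs => hI0 s (ht₁t₀.trans hs)) (fun s hs => hIdiff s (ht₁t₀.trans hs))
      (fun s hs => hI' s (ht₁t₀.trans hs)) ht
  refine ⟨t₁, ht₁t₀, hbound, ?_⟩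
  have hmajorant := ((isBigO_refl _ atTop).const_mul_left (2 * C₂ / C₁)).add
    ((isLittleO_exp_neg_mul_one_add_rpow_sub (div_pos hC₁ hν) hν ((1 + t₁) ^ (1 - β - ε))
      (-1 + β + 2 * ε)).isBigO.const_mul_left (I t₁))
  refine IsBigO.trans (IsBigO.of_bound' ?_) hmajorant
  filter_upwards [eventually_ge_atTop t₁] with t ht
  have hIt := hI0 t (ht₁t₀.trans ht)
  rw [Real.norm_of_nonneg hIt, Real.norm_of_nonneg (hIt.trans (hbound t ht))]
  exact hbound t ht

theorem gronwall_annealing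
    (I : ℝ → ℝ) (t₀ β ε C₁ C₂ : ℝ)
    (ht₀ : 0 ≤ t₀) (hβ : 0 < β) (hβ1 : β < 1) (hε : 0 < ε) (hβε : β + 2 * ε < 1)
    (hC₁ : 0 < C₁) (hC₂ : 0 < C₂)
    (hI0 : ∀ t, t₀ ≤ t → 0 ≤ I t)
    (hIdiff : ∀ t, t₀ ≤ t → DifferentiableAt ℝ I t)
    (hI' : ∀ t, t₀ ≤ t →
      deriv I t ≤ -C₁ * (1 + t) ^ (-β) * I t + C₂ * (1 + t) ^ (-1 + ε)) :
    ∃ t₁ : ℝ, t₀ ≤ t₁ ∧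
      (∀ t, t₁ ≤ t →
        I t ≤ (2 * C₂ / C₁) * (1 + t) ^ (-1 + β + 2 * ε)
          + I t₁ * Real.exp (-(C₁ / (1 - β - ε))
              * ((1 + t) ^ (1 - β - ε) - (1 + t₁) ^ (1 - β - ε)))) ∧
      (fun t => I t) =O[atTop] fun t => (1 + t) ^ (-1 + β + 2 * ε) :=
  gronwall_annealing_general I t₀ β ε C₁ C₂ hβ hε hβε hC₁ hC₂ hI0 hIdiff hI'
end

section
/- Let μ_t(x₁,x₂) = ½(π_t(x₁,x₂) + π_t(x₂,x₁)) where π_t(x₁,x₂) = Z_t^{−1} exp(−H(x₁)/τ₁(t) − H(x₂)/τ₂(t)), with H ≥ 0, min H = 0, and τ₁(t), τ₂(t) positive and decreasing in t. Then the time derivative of ln μ_t satisfies the pointwise bound −(d/dt) ln μ_t(x₁,x₂) ≤ ((d/dt)(1/τ₁(t)) + (d/dt)(1/τ₂(t))) (H(x₁) + H(x₂)). -/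
/-!
Write `μ_t = (e^{-α(t)} + e^{-β(t)}) / (2 Z_t)` with `α = H(x₁)/τ₁ + H(x₂)/τ₂` and `β` the same
with `x₁, x₂` swapped. Then `-(d/dt) ln μ_t` is a convex combination of `α'` and `β'`, plus
`(d/dt) ln Z_t`. Both `α'` and `β'` are at most `((1/τ₁)' + (1/τ₂)')(H(x₁) + H(x₂))` because
`H ≥ 0` and the `1/τ_i` increase, and `Z_t` decreases because its integrand does, so the last
term is nonpositive.
-/

open MeasureTheory Real

/-- If `g` is not differentiable at `t`, neither is `f - g`, so the derivative is the junk value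
`0`; otherwise `g'(t) ≤ 0`. -/
lemma neg_deriv_sub_le_of_antitone {f g : ℝ → ℝ} {f' c t : ℝ} (hf : HasDerivAt f f' t)
    (hg : Antitone g) (hc : 0 ≤ c) (hfc : -f' ≤ c) :
    -deriv (fun u => f u - g u) t ≤ c := by
  by_cases hgd : DifferentiableAt ℝ g t
  · rw [deriv_fun_sub hf.differentiableAt hgd, hf.deriv]
    linarith [hg.deriv_nonpos (x := t)]
  · have hnd : ¬ DifferentiableAt ℝ (fun u => f u - g u) t := fun h =>
      hgd (by simpa using hf.differentiableAt.fun_sub h)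
    rwa [deriv_zero_of_not_differentiableAt hnd, neg_zero]

lemma weighted_average_le {a b x y c : ℝ} (ha : 0 < a) (hb : 0 < b) (hx : x ≤ c) (hy : y ≤ c) :
    (a * x + b * y) / (a + b) ≤ c := by
  rw [div_le_iff₀ (add_pos ha hb)]
  nlinarith

lemma neg_deriv_log_exp_neg_add_exp_neg_div_le {α β Z : ℝ → ℝ} {α' β' c t : ℝ}
    (hα : HasDerivAt α α' t) (hβ : HasDerivAt β β' t) (hZ : Antitone Z) (hZpos : ∀ u, 0 < Z u)
    (hc : 0 ≤ c) (hαc : α' ≤ c) (hβc : β' ≤ c) :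
    -deriv (fun u => log ((exp (-α u) + exp (-β u)) / Z u)) t ≤ c := by
  have hsum_pos : ∀ u, 0 < exp (-α u) + exp (-β u) := fun u => by positivity
  have hsplit : (fun u => log ((exp (-α u) + exp (-β u)) / Z u))
      = fun u => log (exp (-α u) + exp (-β u)) - log (Z u) := by
    funext u
    exact log_div (hsum_pos u).ne' (hZpos u).ne'
  have hlog : HasDerivAt (fun u => log (exp (-α u) + exp (-β u)))
      (-((exp (-α t) * α' + exp (-β t) * β') / (exp (-α t) + exp (-β t)))) t := by
    convert (hα.fun_neg.exp.fun_add hβ.fun_neg.exp).log (hsum_pos t).ne' using 1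
    ring
  rw [hsplit]
  refine neg_deriv_sub_le_of_antitone hlog
    (fun u v huv => log_le_log (hZpos v) (hZ huv)) hc ?_
  rw [neg_neg]
  exact weighted_average_le (exp_pos (-α t)) (exp_pos (-β t)) hαc hβc

theorem annealing_log_density_derivative_bound_general
    {d : ℕ} (H : EuclideanSpace ℝ (Fin d) → ℝ)
    (hH0 : ∀ x, 0 ≤ H x)
    (τ₁ τ₂ : ℝ → ℝ) (hτ₁pos : ∀ t, 0 < τ₁ t) (hτ₂pos : ∀ t, 0 < τ₂ t)
    (hτ₁dec : Antitone τ₁) (hτ₂dec : Antitone τ₂)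
    (hτ₁diff : Differentiable ℝ τ₁) (hτ₂diff : Differentiable ℝ τ₂)
    (Zt : ℝ → ℝ)
    (hZ : ∀ t, Zt t = ∫ p : EuclideanSpace ℝ (Fin d) × EuclideanSpace ℝ (Fin d),
      Real.exp (-H p.1 / τ₁ t - H p.2 / τ₂ t))
    (hZint : ∀ t, Integrable
      (fun p : EuclideanSpace ℝ (Fin d) × EuclideanSpace ℝ (Fin d) =>
        Real.exp (-H p.1 / τ₁ t - H p.2 / τ₂ t)))
    (hZpos : ∀ t, 0 < Zt t)
    (πt : ℝ → EuclideanSpace ℝ (Fin d) → EuclideanSpace ℝ (Fin d) → ℝ)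
    (hπ : ∀ t x₁ x₂, πt t x₁ x₂ = Real.exp (-H x₁ / τ₁ t - H x₂ / τ₂ t) / Zt t)
    (μt : ℝ → EuclideanSpace ℝ (Fin d) → EuclideanSpace ℝ (Fin d) → ℝ)
    (hμ : ∀ t x₁ x₂, μt t x₁ x₂ = (πt t x₁ x₂ + πt t x₂ x₁) / 2) :
    ∀ t x₁ x₂,
      -(deriv (fun u => Real.log (μt u x₁ x₂)) t)
        ≤ (deriv (fun u => 1 / τ₁ u) t + deriv (fun u => 1 / τ₂ u) t)
            * (H x₁ + H x₂) := by
  intro t x₁ x₂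
  have hs₁ : HasDerivAt (fun u => 1 / τ₁ u) (deriv (fun u => 1 / τ₁ u) t) t :=
    ((differentiableAt_const 1).div (hτ₁diff t) (hτ₁pos t).ne').hasDerivAt
  have hs₂ : HasDerivAt (fun u => 1 / τ₂ u) (deriv (fun u => 1 / τ₂ u) t) t :=
    ((differentiableAt_const 1).div (hτ₂diff t) (hτ₂pos t).ne').hasDerivAt
  have hs₁' : 0 ≤ deriv (fun u => 1 / τ₁ u) t :=
    Monotone.deriv_nonneg fun u v huv => one_div_le_one_div_of_le (hτ₁pos v) (hτ₁dec huv)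
  have hs₂' : 0 ≤ deriv (fun u => 1 / τ₂ u) t :=
    Monotone.deriv_nonneg fun u v huv => one_div_le_one_div_of_le (hτ₂pos v) (hτ₂dec huv)
  have hZanti : Antitone Zt := fun u v huv => by
    rw [hZ u, hZ v]
    refine integral_mono (hZint v) (hZint u) fun p => exp_le_exp.2 ?_
    have h₁ := div_le_div_of_nonneg_left (hH0 p.1) (hτ₁pos v) (hτ₁dec huv)
    have h₂ := div_le_div_of_nonneg_left (hH0 p.2) (hτ₂pos v) (hτ₂dec huv)
    simp only [neg_div]
    linarith
  have hμ_eq : (fun u => log (μt u x₁ x₂)) = fun u =>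
      log ((exp (-(H x₁ * (1 / τ₁ u) + H x₂ * (1 / τ₂ u)))
        + exp (-(H x₂ * (1 / τ₁ u) + H x₁ * (1 / τ₂ u)))) / (2 * Zt u)) := by
    funext u
    rw [hμ, hπ, hπ]
    congr 1
    field_simp
    ring_nf
  rw [hμ_eq]
  refine neg_deriv_log_exp_neg_add_exp_neg_div_le
    ((hs₁.const_mul _).add (hs₂.const_mul _)) ((hs₁.const_mul _).add (hs₂.const_mul _))
    (fun u v huv => by linarith [hZanti huv]) (fun u => by linarith [hZpos u])
    (mul_nonneg (add_nonneg hs₁' hs₂') (add_nonneg (hH0 x₁) (hH0 x₂))) ?_ ?_ <;>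
    nlinarith [hH0 x₁, hH0 x₂]

theorem annealing_log_density_derivative_bound
    {d : ℕ} (H : EuclideanSpace ℝ (Fin d) → ℝ)
    (hH0 : ∀ x, 0 ≤ H x) (hmin : ∃ x, H x = 0)
    (τ₁ τ₂ : ℝ → ℝ) (hτ₁pos : ∀ t, 0 < τ₁ t) (hτ₂pos : ∀ t, 0 < τ₂ t)
    (hτ₁dec : Antitone τ₁) (hτ₂dec : Antitone τ₂)
    (hτ₁diff : Differentiable ℝ τ₁) (hτ₂diff : Differentiable ℝ τ₂)
    (Zt : ℝ → ℝ)
    (hZ : ∀ t, Zt t = ∫ p : EuclideanSpace ℝ (Fin d) × EuclideanSpace ℝ (Fin d),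
      Real.exp (-H p.1 / τ₁ t - H p.2 / τ₂ t))
    (hZint : ∀ t, Integrable
      (fun p : EuclideanSpace ℝ (Fin d) × EuclideanSpace ℝ (Fin d) =>
        Real.exp (-H p.1 / τ₁ t - H p.2 / τ₂ t)))
    (hZpos : ∀ t, 0 < Zt t)
    (πt : ℝ → EuclideanSpace ℝ (Fin d) → EuclideanSpace ℝ (Fin d) → ℝ)
    (hπ : ∀ t x₁ x₂, πt t x₁ x₂ = Real.exp (-H x₁ / τ₁ t - H x₂ / τ₂ t) / Zt t)
    (μt : ℝ → EuclideanSpace ℝ (Fin d) → EuclideanSpace ℝ (Fin d) → ℝ)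
    (hμ : ∀ t x₁ x₂, μt t x₁ x₂ = (πt t x₁ x₂ + πt t x₂ x₁) / 2) :
    ∀ t x₁ x₂,
      -(deriv (fun u => Real.log (μt u x₁ x₂)) t)
        ≤ (deriv (fun u => 1 / τ₁ u) t + deriv (fun u => 1 / τ₂ u) t)
            * (H x₁ + H x₂) :=
  annealing_log_density_derivative_bound_general H hH0 τ₁ τ₂ hτ₁pos hτ₂pos hτ₁dec hτ₂dec hτ₁diff
    hτ₂diff Zt hZ hZint hZpos πt hπ μt hμ
end
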